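/- Non-necessity of the computed causes (instance): in the concrete autonomous-car model, removing the cause action hack at index 2 from the narrative σ2 still brings about the effect, because the previously preempted second hack takes over: the list [drive I J, turn J, hack, drive J K, turn K, turn K, drive K J] (σ2 with its first hack deleted) is executable from S0 = ⟨I, false, false⟩ and (run [drive I J, turn J, hack, drive J K, turn K, turn K, drive K J] S0).damaged = true. -/
import Mathlib


inductive Loc : Type
  | I | J | K
deriving DecidableEq

open Loc

def connected : Loc → Loc → Prop
  | I, J => True
  | J, I => True
  | J, K => True
  | K, J => True
  | _, _ => False

inductive Act : Type
  | drive (i j : Loc)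
  | turn (i : Loc)
  | hack
deriving DecidableEq

open Act

structure State : Type where
  pos : Loc
  corrupted : Bool
  damaged : Bool

def step : Act → State → State
  | drive _ j, s => ⟨j, s.corrupted, s.damaged⟩
  | turn _, s => ⟨s.pos, s.corrupted, s.corrupted || s.damaged⟩
  | hack, s => ⟨s.pos, true, s.damaged⟩

def poss : Act → State → Prop
  | drive i j, s => s.pos = i ∧ i ≠ j ∧ connected i j
  | turn i, s => s.pos = i
  | hack, _ => True

def run (l : List Act) (s : State) : State :=
  l.foldl (fun t a => step a t) s

def executable (l : List Act) (s : State) : Prop :=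
  ∀ k : Fin l.length, poss (l.get k) (run (l.take k) s)

def σ1 : List Act := [drive I J, turn J, hack, drive J K, turn K]

def S0 : State := ⟨I, false, false⟩

def S0star : State := ⟨I, true, false⟩

def AchCause : List Act → State → (State → Prop) → ℕ → Prop
  | l, s0, φ, i =>
    ∃ j, ∃ _h1 : 1 ≤ j, ∃ _h2 : j ≤ l.length,
      ¬ φ (run (l.take (j - 1)) s0) ∧
      (∀ k, j ≤ k → k ≤ l.length → φ (run (l.take k) s0)) ∧
      (i = j - 1 ∨
        AchCause (l.take (j - 1)) s0
          (fun s => φ (step (l.get ⟨j - 1, by omega⟩) s) ∧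
            poss (l.get ⟨j - 1, by omega⟩) s) i)
  termination_by l _ _ _ => l.length
  decreasing_by simp [List.length_take]; omega

/-- non-necessity of the computed causes: removing the cause `hack` at
index 2 from σ2 still brings about the effect, the previously preempted second hack
taking over. -/
theorem causes_not_necessary :
    executable [Act.drive Loc.I Loc.J, Act.turn Loc.J, Act.hack, Act.drive Loc.J Loc.K,
        Act.turn Loc.K, Act.turn Loc.K, Act.drive Loc.K Loc.J] S0 ∧
    (run [Act.drive Loc.I Loc.J, Act.turn Loc.J, Act.hack, Act.drive Loc.J Loc.K,
        Act.turn Loc.K, Act.turn Loc.K, Act.drive Loc.K Loc.J] S0).damaged = true := by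
  constructor
  · intro k
    fin_cases k <;> simp [poss, run, step, S0, connected] <;> first | exact ⟨rfl, by simp, trivial⟩ | rfl | trivial
  · rfl
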